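/- (Theorem 1 of the paper: correctness of Dijkstra's algorithm under a δ-partial-ordering.) Let all edge weights satisfy w u v ≥ δ for a fixed real δ > 0, assume every vertex is reachable from the source s (d(v) < ∞ for all v), and let v_1, …, v_n be a bijective enumeration of V with v_1 = s that is a δ-partial-ordering (i < j implies d(v_i) < d(v_j) + δ). Then Dijkstra's label recursion processed in this order is correct: D_j(v_j) = d(v_j) for every j with 1 ≤ j ≤ n, and consequently the final labels satisfy D_{n+1}(v) = d(v) for every v ∈ V. -/

import Mathlib

open scoped ENNReal

/-- The length of the path `p 0, p 1, …, p k` in a graph on `Fin n` with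
edge-weight function `w` (where `w u v = ∞` encodes the absence of an edge). -/
noncomputable def pathCost {n : ℕ} (w : Fin n → Fin n → ℝ≥0∞) (p : ℕ → Fin n) (k : ℕ) : ℝ≥0∞ :=
  ∑ i ∈ Finset.range k, w (p i) (p (i + 1))

/-- The shortest-path distance from `s` to `v`: the infimum over all finite paths
from `s` to `v` of their lengths. -/
noncomputable def spDist {n : ℕ} (w : Fin n → Fin n → ℝ≥0∞) (s v : Fin n) : ℝ≥0∞ :=
  ⨅ (k : ℕ) (p : ℕ → Fin n) (_ : p 0 = s) (_ : p k = v), pathCost w p k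

/-- Dijkstra's label recursion, processed according to the enumeration `e` (0-indexed):
`dijkstraD w s e 0` is the initial labelling (`0` at `s`, `∞` elsewhere), and step `j`
relaxes all edges out of the extracted vertex `e j`.  The paper's `D_j` is
`dijkstraD w s e (j-1)`; the extraction value of `v_j` is `dijkstraD w s e (j-1) (e (j-1))`. -/
noncomputable def dijkstraD {n : ℕ} (w : Fin n → Fin n → ℝ≥0∞) (s : Fin n) (e : Fin n → Fin n) :
    ℕ → Fin n → ℝ≥0∞
  | 0 => fun u => if u = s then 0 else ⊤
  | j + 1 => fun u =>
      if h : j < n then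
        min (dijkstraD w s e j u) (dijkstraD w s e j (e ⟨j, h⟩) + w (e ⟨j, h⟩) u)
      else dijkstraD w s e j u

/-!
Induction on `j`. Given a path from `s` to `v_j`, look at its first vertex `u` that is not
among `v_1, …, v_{j-1}`. Its predecessor `v_r` had the exact label `d(v_r)` when it was
extracted, so after relaxing `v_r` the label `D_j(u)` is at most the length of the path up to
`u`. If `u = v_j`, this bounds `D_j(v_j)` by the length of the path. Otherwise `u = v_m` with
`m > j` and at least one more edge of weight `≥ δ` follows `u`, so the path is no shorter than
`d(v_m) + δ`, which exceeds `d(v_j)` by the `δ`-partial-ordering. Taking the infimum over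
all paths gives `D_j(v_j) ≤ d(v_j)`; the reverse inequality holds for every label.
-/

section Paths

variable {n : ℕ} (w : Fin n → Fin n → ℝ≥0∞)

lemma pathCost_succ (p : ℕ → Fin n) (k : ℕ) :
    pathCost w p (k + 1) = pathCost w p k + w (p k) (p (k + 1)) :=
  Finset.sum_range_succ _ _

lemma pathCost_mono (p : ℕ → Fin n) : Monotone (pathCost w p) :=
  monotone_nat_of_le_succ fun k => by rw [pathCost_succ]; exact le_self_add

lemma pathCost_update_succ (p : ℕ → Fin n) (k : ℕ) (v : Fin n) :
    pathCost w (Function.update p (k + 1) v) (k + 1) = pathCost w p k + w (p k) v := by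
  rw [pathCost_succ, pathCost]
  congr 1
  · refine Finset.sum_congr rfl fun i hi => ?_
    have hi : i < k := Finset.mem_range.1 hi
    rw [Function.update_of_ne (by omega), Function.update_of_ne (by omega)]
  · rw [Function.update_of_ne (by omega), Function.update_self]

variable (s : Fin n)

lemma spDist_le_pathCost {v : Fin n} {p : ℕ → Fin n} {k : ℕ} (h0 : p 0 = s) (hk : p k = v) :
    spDist w s v ≤ pathCost w p k :=
  iInf_le_of_le k <| iInf_le_of_le p <| iInf_le_of_le h0 <| iInf_le _ hk

lemma le_spDist {v : Fin n} {a : ℝ≥0∞}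
    (h : ∀ (k : ℕ) (p : ℕ → Fin n), p 0 = s → p k = v → a ≤ pathCost w p k) :
    a ≤ spDist w s v :=
  le_iInf fun k => le_iInf fun p => le_iInf fun h0 => le_iInf fun hk => h k p h0 hk

lemma spDist_self : spDist w s s = 0 :=
  nonpos_iff_eq_zero.1 <| (spDist_le_pathCost w s (p := fun _ => s) (k := 0) rfl rfl).trans_eq <|
    by simp [pathCost]

lemma spDist_le_add (u v : Fin n) : spDist w s v ≤ spDist w s u + w u v := by
  calc spDist w s v
      ≤ ⨅ (k : ℕ) (p : ℕ → Fin n) (_ : p 0 = s) (_ : p k = u), (pathCost w p k + w u v) := by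
        refine le_iInf fun k => le_iInf fun p => le_iInf fun h0 => le_iInf fun hk => ?_
        rw [← hk, ← pathCost_update_succ]
        exact spDist_le_pathCost w s (by rw [Function.update_of_ne (by omega), h0])
          (Function.update_self _ _ _)
    _ = spDist w s u + w u v := by simp only [spDist, ENNReal.iInf_add]

end Paths

section Labels

variable {n : ℕ} (w : Fin n → Fin n → ℝ≥0∞) (s : Fin n) (e : Fin n → Fin n)

lemma dijkstraD_zero_self : dijkstraD w s e 0 s = 0 := by
  simp [dijkstraD]

lemma dijkstraD_succ (r : Fin n) (u : Fin n) :
    dijkstraD w s e (r + 1) u =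
      min (dijkstraD w s e r u) (dijkstraD w s e r (e r) + w (e r) u) := by
  simp [dijkstraD, r.isLt]

lemma dijkstraD_antitone : Antitone (dijkstraD w s e) := by
  refine antitone_nat_of_succ_le fun j u => ?_
  rw [dijkstraD]
  split
  · exact min_le_left _ _
  · exact le_rfl

lemma dijkstraD_le_add_of_lt {j : ℕ} {r : Fin n} (hr : (r : ℕ) < j) (u : Fin n) :
    dijkstraD w s e j u ≤ dijkstraD w s e r (e r) + w (e r) u :=
  calc dijkstraD w s e j u ≤ dijkstraD w s e (r + 1) u := dijkstraD_antitone w s e hr u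
    _ ≤ _ := by rw [dijkstraD_succ]; exact min_le_right _ _

lemma spDist_le_dijkstraD (j : ℕ) (u : Fin n) : spDist w s u ≤ dijkstraD w s e j u := by
  induction j generalizing u with
  | zero =>
    by_cases hu : u = s
    · subst hu; simp [dijkstraD, spDist_self]
    · simp [dijkstraD, hu]
  | succ j ih =>
    rw [dijkstraD]
    split
    · exact le_min (ih u) ((spDist_le_add w s _ u).trans (add_le_add (ih _) le_rfl))
    · exact ih u

lemma exists_dijkstraD_le_pathCost_of_not_mem {j : ℕ}
    (hexact : ∀ r : Fin n, (r : ℕ) < j → dijkstraD w s e r (e r) ≤ spDist w s (e r))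
    {p : ℕ → Fin n} (h0 : p 0 = s) {k : ℕ} (hk : ∀ r : Fin n, (r : ℕ) < j → e r ≠ p k) :
    ∃ i ≤ k, (∀ r : Fin n, (r : ℕ) < j → e r ≠ p i) ∧
      dijkstraD w s e j (p i) ≤ pathCost w p i := by
  induction k with
  | zero =>
    refine ⟨0, le_rfl, hk, ?_⟩
    rw [h0]
    exact (dijkstraD_antitone w s e (Nat.zero_le j) s).trans (dijkstraD_zero_self w s e).le
  | succ k ih =>
    by_cases hprev : ∃ r : Fin n, (r : ℕ) < j ∧ e r = p k
    · obtain ⟨r, hr, hrk⟩ := hprev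
      refine ⟨k + 1, le_rfl, hk, ?_⟩
      calc dijkstraD w s e j (p (k + 1))
          ≤ dijkstraD w s e r (e r) + w (e r) (p (k + 1)) := dijkstraD_le_add_of_lt w s e hr _
        _ ≤ pathCost w p k + w (p k) (p (k + 1)) := by
          rw [← hrk]
          exact add_le_add ((hexact r hr).trans (spDist_le_pathCost w s h0 hrk.symm)) le_rfl
        _ = pathCost w p (k + 1) := (pathCost_succ w p k).symm
    · obtain ⟨i, hik, hi⟩ := ih fun r hr h => hprev ⟨r, hr, h⟩
      exact ⟨i, hik.trans k.le_succ, hi⟩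

variable {e} {c : ℝ≥0∞}

lemma dijkstraD_le_pathCost_or_exists_lt (hw : ∀ u v, c ≤ w u v) (he : e.Bijective) (j : Fin n)
    (hexact : ∀ r : Fin n, r < j → dijkstraD w s e r (e r) ≤ spDist w s (e r))
    {p : ℕ → Fin n} {k : ℕ} (h0 : p 0 = s) (hk : p k = e j) :
    dijkstraD w s e j (e j) ≤ pathCost w p k ∨
      ∃ m, j < m ∧ spDist w s (e m) + c ≤ pathCost w p k := by
  obtain ⟨i, hik, hnot, hi⟩ := exists_dijkstraD_le_pathCost_of_not_mem w s e hexact h0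
    (fun r (hr : r < j) h => hr.ne (he.1 (h.trans hk)))
  obtain ⟨m, hm⟩ := he.2 (p i)
  rcases (not_lt.1 fun (hmj : m < j) => hnot m hmj hm).eq_or_lt with rfl | hjm
  · exact .inl (hm ▸ hi.trans (pathCost_mono w p hik))
  · have hik : i < k := hik.lt_of_ne fun h => hjm.ne' (he.1 (hm.trans (h ▸ hk)))
    refine .inr ⟨m, hjm, ?_⟩
    calc spDist w s (e m) + c ≤ pathCost w p i + w (p i) (p (i + 1)) :=
          add_le_add (spDist_le_pathCost w s h0 hm.symm) (hw _ _)
      _ = pathCost w p (i + 1) := (pathCost_succ w p i).symm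
      _ ≤ pathCost w p k := pathCost_mono w p hik

lemma dijkstraD_le_spDist_of_partialOrder (hw : ∀ u v, c ≤ w u v) (he : e.Bijective)
    (hPO : ∀ i j : Fin n, i < j → spDist w s (e i) < spDist w s (e j) + c) (j : Fin n)
    (hexact : ∀ r : Fin n, r < j → dijkstraD w s e r (e r) ≤ spDist w s (e r)) :
    dijkstraD w s e j (e j) ≤ spDist w s (e j) := by
  by_contra! hlt
  set later := Finset.univ.filter (j < ·)
  have hlater : spDist w s (e j) < later.inf fun m => spDist w s (e m) + c :=
    (Finset.lt_inf_iff (hlt.trans_le le_top)).2 fun m hm => hPO j m (Finset.mem_filter.1 hm).2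
  have hpaths : min (dijkstraD w s e j (e j)) (later.inf fun m => spDist w s (e m) + c) ≤
      spDist w s (e j) := by
    refine le_spDist w s fun k p h0 hk => ?_
    rcases dijkstraD_le_pathCost_or_exists_lt w s hw he j hexact h0 hk with h | ⟨m, hjm, hm⟩
    · exact min_le_of_left_le h
    · exact min_le_of_right_le ((Finset.inf_le (by simpa [later] using hjm)).trans hm)
  exact (lt_min hlt hlater).not_ge hpaths

end Labels

theorem dijkstra_correct_of_deltaPO_general {n : ℕ} (w : Fin n → Fin n → ℝ≥0∞) (s : Fin n)
    (δ : ℝ) (hw : ∀ u v : Fin n, ENNReal.ofReal δ ≤ w u v)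
    (e : Fin n → Fin n) (he : Function.Bijective e)
    (hPO : ∀ i j : Fin n, i < j → spDist w s (e i) < spDist w s (e j) + ENNReal.ofReal δ) :
    (∀ j : Fin n, dijkstraD w s e j.val (e j) = spDist w s (e j)) ∧
      (∀ v : Fin n, dijkstraD w s e n v = spDist w s v) := by
  have hextract : ∀ j : Fin n, dijkstraD w s e j.val (e j) = spDist w s (e j) := by
    intro j
    induction j using WellFoundedLT.induction with
    | _ j ih =>
      exact (dijkstraD_le_spDist_of_partialOrder w s hw he hPO j fun r hr => (ih r hr).le).antisymm
        (spDist_le_dijkstraD w s e _ _)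
  refine ⟨hextract, fun v => ?_⟩
  obtain ⟨j, rfl⟩ := he.2 v
  exact ((dijkstraD_antitone w s e j.isLt.le (e j)).trans (hextract j).le).antisymm
    (spDist_le_dijkstraD w s e _ _)

/-- Theorem 1: correctness of Dijkstra's algorithm under a δ-partial-ordering.
If all edge weights are at least `δ > 0`, every vertex is reachable from `s`, and
`e` is a bijective enumeration of the vertices starting at `s` that is a
δ-partial-ordering, then every extraction value is correct (`D_j (v_j) = d (v_j)`)
and the final labels equal the shortest-path distances. -/
theorem dijkstra_correct_of_deltaPO {n : ℕ} (hn : 0 < n) (w : Fin n → Fin n → ℝ≥0∞) (s : Fin n)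
    (δ : ℝ) (hδ : 0 < δ) (hw : ∀ u v : Fin n, ENNReal.ofReal δ ≤ w u v)
    (hreach : ∀ v : Fin n, spDist w s v < ⊤)
    (e : Fin n → Fin n) (he : Function.Bijective e) (hes : e ⟨0, hn⟩ = s)
    (hPO : ∀ i j : Fin n, i < j → spDist w s (e i) < spDist w s (e j) + ENNReal.ofReal δ) :
    (∀ j : Fin n, dijkstraD w s e j.val (e j) = spDist w s (e j)) ∧
      (∀ v : Fin n, dijkstraD w s e n v = spDist w s v) :=
  dijkstra_correct_of_deltaPO_general w s δ hw e he hPO
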